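/- (Probabilistic Banach–Stone) Let ⋆ be a continuous and sup-continuous triangle function whose monoid (Δ⁺,⋆) has trivial group of units, and let (G,·,D,⋆) and (G',·,D',⋆) be probabilistic invariant complete metric groups. Then G and G' are isometrically isomorphic as groups if and only if (Lip¹_⋆(G,Δ⁺), ⊙, 𝔻̄) and (Lip¹_⋆(G',Δ⁺), ⊙, 𝔻̄) are isometrically isomorphic as probabilistic metric monoids. -/

import Mathlib

open Filter Topology Set

/-- A (real-domain representation of a) distribution function in Δ⁺ :
nondecreasing, with values in [0,1], left-continuous, vanishing on (-∞,0]. -/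
def MemDP (f : ℝ → ℝ) : Prop :=
  Monotone f ∧ (∀ t, 0 ≤ f t) ∧ (∀ t, f t ≤ 1) ∧
  (∀ t : ℝ, Tendsto f (nhdsWithin t (Set.Iio t)) (nhds (f t))) ∧
  (∀ t ≤ (0:ℝ), f t = 0)

/-- The distribution H₀. -/
noncomputable def H0 : ℝ → ℝ := fun t => if 0 < t then 1 else 0

/-- The distribution H_∞ (zero at every finite point). -/
def Hinf : ℝ → ℝ := fun _ => 0

/-- Pointwise order on distribution functions. -/
def dpLE (f g : ℝ → ℝ) : Prop := ∀ t, f t ≤ g t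

/-- Triangle function on Δ⁺. -/
structure IsTriangle (star : (ℝ → ℝ) → (ℝ → ℝ) → (ℝ → ℝ)) : Prop where
  mem : ∀ f g, MemDP f → MemDP g → MemDP (star f g)
  comm : ∀ f g, MemDP f → MemDP g → star f g = star g f
  assoc : ∀ f g h, MemDP f → MemDP g → MemDP h →
    star f (star g h) = star (star f g) h
  ident : ∀ f, MemDP f → star f H0 = f
  mono : ∀ f g h, MemDP f → MemDP g → MemDP h → dpLE f g → dpLE (star f h) (star g h)

/-- Sup-continuity of a triangle function (suprema in Δ⁺ are pointwise). -/
def SupCont (star : (ℝ → ℝ) → (ℝ → ℝ) → (ℝ → ℝ)) : Prop :=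
  ∀ (I : Type) (_ : Nonempty I) (F : I → ℝ → ℝ) (L : ℝ → ℝ),
    (∀ i, MemDP (F i)) → MemDP L →
    ∀ t, (⨆ i, star (F i) L t) = star (fun s => ⨆ i, F i s) L t

/-- Weak convergence in Δ⁺: pointwise convergence at each continuity point of the limit. -/
def WConv (Fn : ℕ → ℝ → ℝ) (F : ℝ → ℝ) : Prop :=
  ∀ t, ContinuousAt F t → Tendsto (fun n => Fn n t) atTop (nhds (F t))

/-- Continuity of a triangle function w.r.t. weak convergence. -/
def StarCont (star : (ℝ → ℝ) → (ℝ → ℝ) → (ℝ → ℝ)) : Prop :=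
  ∀ (Fn Ln : ℕ → ℝ → ℝ) (F L : ℝ → ℝ),
    (∀ n, MemDP (Fn n)) → (∀ n, MemDP (Ln n)) → MemDP F → MemDP L →
    WConv Fn F → WConv Ln L → WConv (fun n => star (Fn n) (Ln n)) (star F L)

/-- Probabilistic metric space (G, D, ⋆). -/
structure IsPMS {G : Type} (D : G → G → ℝ → ℝ)
    (star : (ℝ → ℝ) → (ℝ → ℝ) → (ℝ → ℝ)) : Prop where
  tri : IsTriangle star
  mem : ∀ p q, MemDP (D p q)
  eq_iff : ∀ p q, D p q = H0 ↔ p = q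
  symm : ∀ p q, D p q = D q p
  triangle_ineq : ∀ p q r, dpLE (star (D p q) (D q r)) (D p r)

/-- Probabilistic invariant metric group. -/
structure IsPIMG {G : Type} [Group G] (D : G → G → ℝ → ℝ)
    (star : (ℝ → ℝ) → (ℝ → ℝ) → (ℝ → ℝ)) extends IsPMS D star : Prop where
  invL : ∀ p q r : G, D (r * p) (r * q) = D p q
  invR : ∀ p q r : G, D (p * r) (q * r) = D p q

/-- Probabilistic 1-Lipschitz map. -/
def Lip1 {G : Type} (D : G → G → ℝ → ℝ) (star : (ℝ → ℝ) → (ℝ → ℝ) → (ℝ → ℝ))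
    (f : G → ℝ → ℝ) : Prop :=
  (∀ x, MemDP (f x)) ∧ ∀ x y, dpLE (star (D x y) (f y)) (f x)

/-- δ_a(y) = D(y,a). -/
def dlt {G : Type} (D : G → G → ℝ → ℝ) (a : G) : G → ℝ → ℝ := fun y => D y a

/-- Sup-convolution (f ⊙ g)(x) = sup_{yz = x} f(y) ⋆ g(z), pointwise. -/
noncomputable def sconv {G : Type} [Group G] (star : (ℝ → ℝ) → (ℝ → ℝ) → (ℝ → ℝ))
    (f g : G → ℝ → ℝ) : G → ℝ → ℝ :=
  fun x t => ⨆ y : G, star (f (x * y⁻¹)) (g y) t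

/-- Cauchy sequence for a probabilistic metric: D(a_n, a_p) → H₀ weakly. -/
def PCauchy {G : Type} (D : G → G → ℝ → ℝ) (a : ℕ → G) : Prop :=
  ∀ t > (0:ℝ), ∀ ε > (0:ℝ), ∃ N, ∀ n ≥ N, ∀ p ≥ N, 1 - ε ≤ D (a n) (a p) t

/-- Π(G): probabilistic 1-Lipschitz maps that are pointwise weak limits of δ_{a_n}
for some Cauchy sequence (a_n). -/
def InPi {G : Type} (D : G → G → ℝ → ℝ) (star : (ℝ → ℝ) → (ℝ → ℝ) → (ℝ → ℝ))
    (f : G → ℝ → ℝ) : Prop :=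
  Lip1 D star f ∧ ∃ a : ℕ → G, PCauchy D a ∧ ∀ x, WConv (fun n => D (a n) x) (f x)

/-- 𝔻(f,g) = sup_{x∈G} f(x) ⋆ g(x), pointwise. -/
noncomputable def DD {G : Type} (star : (ℝ → ℝ) → (ℝ → ℝ) → (ℝ → ℝ))
    (f g : G → ℝ → ℝ) : ℝ → ℝ :=
  fun t => ⨆ x : G, star (f x) (g x) t

/-- t-norm on [0,1]. -/
structure IsTnorm (T : ℝ → ℝ → ℝ) : Prop where
  mem : ∀ x ∈ Set.Icc (0:ℝ) 1, ∀ y ∈ Set.Icc (0:ℝ) 1, T x y ∈ Set.Icc (0:ℝ) 1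
  comm : ∀ x y, T x y = T y x
  assoc : ∀ x y z, T x (T y z) = T (T x y) z
  mono : ∀ x y z, y ≤ z → T x y ≤ T x z
  one : ∀ x ∈ Set.Icc (0:ℝ) 1, T x 1 = x

/-- Left-continuity of a t-norm (in each variable; by commutativity one suffices). -/
def LeftCtsTnorm (T : ℝ → ℝ → ℝ) : Prop :=
  ∀ y x : ℝ, Tendsto (fun s => T s y) (nhdsWithin x (Set.Iio x)) (nhds (T x y))

/-- The triangle function ⋆_T : (F ⋆_T L)(t) = sup_{s+u=t} T(F(s), L(u)). -/
noncomputable def starT (T : ℝ → ℝ → ℝ) (f g : ℝ → ℝ) : ℝ → ℝ :=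
  fun t => ⨆ s : ℝ, T (f s) (g (t - s))

/-- The extended probabilistic metric 𝔻̄ on Lip¹_⋆(G,Δ⁺). -/
noncomputable def DDbar {G : Type} (D : G → G → ℝ → ℝ)
    (star : (ℝ → ℝ) → (ℝ → ℝ) → (ℝ → ℝ)) (f g : G → ℝ → ℝ) : ℝ → ℝ := by
  classical
  exact if InPi D star f ∧ InPi D star g then DD star f g
    else if f = g then H0 else Hinf


/-!
An isometric group isomorphism `I` transports Lipschitz maps by `f ↦ f ∘ I⁻¹`. Conversely,
the Dirac maps `δ_a = D(·, a)` satisfy `δ_a ⊙ δ_b = δ_{ab}` and `𝔻̄(δ_a, δ_b) = D(a, b)`, and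
they are exactly the invertible elements of `(Lip¹, ⊙)`; so a monoid isometry restricts to an
isometric isomorphism of the groups of Dirac maps.

That a unit `f` (with `f ⊙ g = δ_1`) is a Dirac map is where completeness enters: near-maximizers
of the supremum defining `(f ⊙ g)(1)` give a Cauchy sequence `a_n` with `f(a_n) → H₀` and
`g(a_n⁻¹) → H₀`. The limit `z` of `a_n` satisfies `δ_z ≤ f` by the Lipschitz property, and the
limit `w` of `a_n⁻¹` satisfies `g(w) = H₀`, whence `f ≤ δ_{w⁻¹}`; together they force `f = δ_z`.
-/

lemma H0_of_pos {t : ℝ} (ht : 0 < t) : H0 t = 1 := if_pos ht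

lemma H0_of_nonpos {t : ℝ} (ht : t ≤ 0) : H0 t = 0 := if_neg (not_lt.2 ht)

lemma memDP_H0 : MemDP H0 := by
  refine ⟨fun s t hst => ?_, fun t => ?_, fun t => ?_, fun t => ?_, fun t => H0_of_nonpos⟩
  · unfold H0
    split_ifs with hs ht
    · exact le_rfl
    · exact absurd (hs.trans_le hst) ht
    · norm_num
    · exact le_rfl
  · unfold H0; split_ifs <;> norm_num
  · unfold H0; split_ifs <;> norm_num
  · rcases lt_or_ge 0 t with ht | ht
    · have hev : H0 =ᶠ[𝓝[<] t] fun _ => 1 := by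
        filter_upwards [nhdsWithin_le_nhds (Ioi_mem_nhds ht)] with s hs using H0_of_pos hs
      rw [H0_of_pos ht]
      exact tendsto_const_nhds.congr' hev.symm
    · have hev : H0 =ᶠ[𝓝[<] t] fun _ => 0 := by
        filter_upwards [self_mem_nhdsWithin] with s hs using H0_of_nonpos (hs.trans_le ht).le
      rw [H0_of_nonpos ht]
      exact tendsto_const_nhds.congr' hev.symm

lemma continuousAt_H0 {t : ℝ} (ht : 0 < t) : ContinuousAt H0 t :=
  continuousAt_const.congr (by filter_upwards [Ioi_mem_nhds ht] with s hs using (H0_of_pos hs).symm)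

lemma dpLE_H0 {f : ℝ → ℝ} (hf : MemDP f) : dpLE f H0 := by
  intro t
  rcases lt_or_ge 0 t with ht | ht
  · rw [H0_of_pos ht]; exact hf.2.2.1 t
  · rw [H0_of_nonpos ht, hf.2.2.2.2 t ht]

lemma eq_H0_of_H0_le {f : ℝ → ℝ} (hf : MemDP f) (h : dpLE H0 f) : f = H0 :=
  funext fun t => le_antisymm (dpLE_H0 hf t) (h t)

lemma bddAbove_range_of_memDP {ι : Type} {F : ι → ℝ → ℝ} (hF : ∀ i, MemDP (F i)) (t : ℝ) :
    BddAbove (range fun i => F i t) :=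
  ⟨1, forall_mem_range.2 fun i => (hF i).2.2.1 t⟩

lemma MemDP.sSup_image_Iio {f : ℝ → ℝ} (hf : MemDP f) (t : ℝ) : sSup (f '' Iio t) = f t :=
  tendsto_nhds_unique (hf.1.tendsto_nhdsLT t) (hf.2.2.2.1 t)

lemma memDP_iSup {ι : Type} [Nonempty ι] {F : ι → ℝ → ℝ} (hF : ∀ i, MemDP (F i)) :
    MemDP (fun t => ⨆ i, F i t) := by
  have hb := bddAbove_range_of_memDP hF
  have hmono : Monotone (fun t => ⨆ i, F i t) := fun s t hst =>
    ciSup_le fun i => ((hF i).1 hst).trans (le_ciSup (hb t) i)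
  refine ⟨hmono, fun t => ?_, fun t => ciSup_le fun i => (hF i).2.2.1 t, fun t => ?_,
    fun t ht => ?_⟩
  · exact le_ciSup_of_le (hb t) (Classical.arbitrary ι) ((hF _).2.1 t)
  · have hbdd : BddAbove ((fun u => ⨆ i, F i u) '' Iio t) :=
      ⟨_, forall_mem_image.2 fun s hs => hmono (le_of_lt hs)⟩
    have hleft : sSup ((fun u => ⨆ i, F i u) '' Iio t) = ⨆ i, F i t := by
      refine le_antisymm (csSup_le (nonempty_Iio.image _)
        (forall_mem_image.2 fun s hs => hmono (le_of_lt hs))) (ciSup_le fun i => ?_)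
      rw [← (hF i).sSup_image_Iio t]
      exact csSup_le (nonempty_Iio.image _) (forall_mem_image.2 fun s hs =>
        (le_ciSup (hb s) i).trans (le_csSup hbdd (mem_image_of_mem _ hs)))
    simpa [hleft] using hmono.tendsto_nhdsLT t
  · simp only [(hF _).2.2.2.2 t ht, ciSup_const]

lemma wconv_H0_of_one_sub_le {F : ℕ → ℝ → ℝ} (hF : ∀ n, MemDP (F n))
    (hb : ∀ n : ℕ, 1 - 1 / (n + 1 : ℝ) ≤ F n (1 / (n + 1 : ℝ))) : WConv F H0 := by
  intro t _
  rcases le_or_gt t 0 with ht | ht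
  · simp only [H0_of_nonpos ht, (hF _).2.2.2.2 t ht, tendsto_const_nhds]
  rw [H0_of_pos ht]
  have hlow : Tendsto (fun n : ℕ => 1 - 1 / (n + 1 : ℝ)) atTop (𝓝 1) := by
    simpa using tendsto_const_nhds.sub (tendsto_one_div_add_atTop_nhds_zero_nat (𝕜 := ℝ))
  refine tendsto_of_tendsto_of_tendsto_of_le_of_le' hlow tendsto_const_nhds ?_
    (Eventually.of_forall fun n => (hF n).2.2.1 t)
  filter_upwards [tendsto_one_div_add_atTop_nhds_zero_nat.eventually_lt_const ht] with n hn
  exact (hb n).trans ((hF n).1 hn.le)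

section TriangleFunction

variable {star : (ℝ → ℝ) → (ℝ → ℝ) → (ℝ → ℝ)}

lemma IsTriangle.H0_star (tri : IsTriangle star) {f : ℝ → ℝ} (hf : MemDP f) :
    star H0 f = f := by
  rw [tri.comm H0 f memDP_H0 hf, tri.ident f hf]

lemma IsTriangle.star_le_right (tri : IsTriangle star) {f g : ℝ → ℝ} (hf : MemDP f)
    (hg : MemDP g) : dpLE (star f g) g := by
  simpa only [tri.H0_star hg] using tri.mono f H0 g hf memDP_H0 hg (dpLE_H0 hf)

lemma IsTriangle.star_le_left (tri : IsTriangle star) {f g : ℝ → ℝ} (hf : MemDP f)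
    (hg : MemDP g) : dpLE (star f g) f :=
  tri.comm f g hf hg ▸ tri.star_le_right hg hf

lemma StarCont.wconv_star_H0 (hc : StarCont star) (tri : IsTriangle star)
    {F L : ℕ → ℝ → ℝ} (hF : ∀ n, MemDP (F n)) (hL : ∀ n, MemDP (L n))
    (hFw : WConv F H0) (hLw : WConv L H0) : WConv (fun n => star (F n) (L n)) H0 := by
  simpa only [tri.ident H0 memDP_H0] using hc F L H0 H0 hF hL memDP_H0 memDP_H0 hFw hLw

lemma StarCont.pCauchy_of_star_le {G : Type} {D : G → G → ℝ → ℝ} (hc : StarCont star)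
    (tri : IsTriangle star) {F L : ℕ → ℝ → ℝ} (hF : ∀ n, MemDP (F n)) (hL : ∀ n, MemDP (L n))
    (hFw : WConv F H0) (hLw : WConv L H0) {a : ℕ → G}
    (hle : ∀ n p t, star (F n) (L p) t ≤ D (a n) (a p) t) : PCauchy D a := by
  intro t ht ε hε
  -- continuity of `⋆` is only available along sequences, so argue along a bad pair of them
  by_contra! hcon
  choose n hn p hp hlt using hcon
  have hnt : Tendsto n atTop atTop := tendsto_atTop_mono hn tendsto_id
  have hpt : Tendsto p atTop atTop := tendsto_atTop_mono hp tendsto_id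
  have hS := hc.wconv_star_H0 tri (fun k => hF (n k)) (fun k => hL (p k))
    (fun s hs => (hFw s hs).comp hnt) (fun s hs => (hLw s hs).comp hpt) t (continuousAt_H0 ht)
  rw [H0_of_pos ht] at hS
  obtain ⟨k, hk⟩ := (hS.eventually_const_lt (by linarith : 1 - ε < 1)).exists
  exact (hlt k).not_ge ((hk.trans_le (hle _ _ t)).le)

end TriangleFunction

section MetricSpace

variable {G : Type} {D : G → G → ℝ → ℝ} {star : (ℝ → ℝ) → (ℝ → ℝ) → (ℝ → ℝ)}

lemma IsPMS.D_self (h : IsPMS D star) (a : G) : D a a = H0 := (h.eq_iff a a).2 rfl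

lemma IsPMS.eq_of_H0_le (h : IsPMS D star) {a b : G} (hab : dpLE H0 (D a b)) : a = b :=
  (h.eq_iff a b).1 (eq_H0_of_H0_le (h.mem a b) hab)

lemma IsPMS.lip1_dlt (h : IsPMS D star) (a : G) : Lip1 D star (dlt D a) :=
  ⟨fun x => h.mem x a, fun x y => h.triangle_ineq x y a⟩

lemma IsPMS.dlt_injective (h : IsPMS D star) : Function.Injective (dlt D) := fun a b hab =>
  ((h.eq_iff a b).1 ((congrFun hab a).symm.trans (h.D_self a))).symm ▸ rfl

lemma IsPMS.inPi_dlt (h : IsPMS D star) (a : G) : InPi D star (dlt D a) := by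
  refine ⟨h.lip1_dlt a, fun _ => a, fun t ht ε hε => ⟨0, fun _ _ _ _ => ?_⟩,
    fun x _ _ => ?_⟩
  · rw [h.D_self, H0_of_pos ht]; linarith
  · simpa only [dlt, h.symm a x] using tendsto_const_nhds

lemma IsPMS.DD_dlt (h : IsPMS D star) (a b : G) : DD star (dlt D a) (dlt D b) = D a b := by
  have : Nonempty G := ⟨a⟩
  funext t
  refine le_antisymm (ciSup_le fun x => ?_) ?_
  · simpa only [dlt, h.symm x a] using h.triangle_ineq a x b t
  · refine le_trans ?_ (le_ciSup (bddAbove_range_of_memDP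
      (fun x => h.tri.mem _ _ (h.mem x a) (h.mem x b)) t) a)
    simp only [h.D_self, h.tri.H0_star (h.mem a b), le_refl]

lemma IsPMS.DDbar_dlt (h : IsPMS D star) (a b : G) :
    DDbar D star (dlt D a) (dlt D b) = D a b := by
  rw [DDbar, if_pos ⟨h.inPi_dlt a, h.inPi_dlt b⟩, h.DD_dlt]

lemma Lip1.eq_H0_of_wconv {f : G → ℝ → ℝ} (hf : Lip1 D star f) (h : IsPMS D star)
    (hc : StarCont star) {b : ℕ → G} {z : G} (hfb : WConv (fun n => f (b n)) H0)
    (hbz : WConv (fun n => D (b n) z) H0) : f z = H0 := by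
  refine eq_H0_of_H0_le (hf.1 z) fun t => ?_
  rcases le_or_gt t 0 with ht | ht
  · rw [H0_of_nonpos ht]; exact (hf.1 z).2.1 t
  have hzb : WConv (fun n => D z (b n)) H0 := by simpa only [h.symm z] using hbz
  have hlim := hc.wconv_star_H0 h.tri (fun n => h.mem _ _) (fun n => hf.1 _) hzb hfb t
    (continuousAt_H0 ht)
  exact le_of_tendsto hlim (Eventually.of_forall fun n => hf.2 z (b n) t)

lemma Lip1.D_le_of_eq_H0 {f : G → ℝ → ℝ} (hf : Lip1 D star f) (h : IsPMS D star) {z : G}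
    (hfz : f z = H0) (x : G) : dpLE (D x z) (f x) := by
  simpa only [hfz, h.tri.ident _ (h.mem x z)] using hf.2 x z

end MetricSpace

section MetricGroup

variable {G : Type} [Group G] {D : G → G → ℝ → ℝ} {star : (ℝ → ℝ) → (ℝ → ℝ) → (ℝ → ℝ)}

lemma IsPIMG.D_mul_inv_one (h : IsPIMG D star) (x y : G) : D (x * y⁻¹) 1 = D x y := by
  simpa using (h.invR (x * y⁻¹) 1 y).symm

lemma IsPIMG.D_inv_inv (h : IsPIMG D star) (x y : G) : D x⁻¹ y⁻¹ = D y x := by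
  rw [← h.D_mul_inv_one y x, ← h.invL x⁻¹ y⁻¹ y, mul_inv_cancel]

lemma IsPIMG.pCauchy_inv (h : IsPIMG D star) {a : ℕ → G} (ha : PCauchy D a) :
    PCauchy D (fun n => (a n)⁻¹) := by
  intro t ht ε hε
  obtain ⟨N, hN⟩ := ha t ht ε hε
  exact ⟨N, fun n hn p hp => h.D_inv_inv (a n) (a p) ▸ hN p hp n hn⟩

lemma IsPIMG.sconv_dlt (h : IsPIMG D star) (a b : G) :
    sconv star (dlt D a) (dlt D b) = dlt D (a * b) := by
  have hD : ∀ x y, D (x * y⁻¹) a = D x (a * y) := fun x y => by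
    simpa using (h.invR (x * y⁻¹) a y).symm
  funext x t
  refine le_antisymm (ciSup_le fun y => ?_) ?_
  · simpa only [dlt, hD, ← h.invL y b a] using h.triangle_ineq x (a * y) (a * b) t
  · refine le_trans ?_ (le_ciSup (bddAbove_range_of_memDP
      (fun y => h.tri.mem _ _ (h.mem (x * y⁻¹) a) (h.mem y b)) t) b)
    simp only [dlt, hD, h.D_self, h.tri.ident _ (h.mem _ _), le_refl]

lemma le_sconv {f g : G → ℝ → ℝ} (tri : IsTriangle star) (hf : ∀ x, MemDP (f x))
    (hg : ∀ x, MemDP (g x)) (x y : G) (t : ℝ) :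
    star (f (x * y⁻¹)) (g y) t ≤ sconv star f g x t :=
  le_ciSup (bddAbove_range_of_memDP (fun y => tri.mem _ _ (hf (x * y⁻¹)) (hg y)) t) y

lemma IsPIMG.lip1_sconv (h : IsPIMG D star) (hsc : SupCont star) {f g : G → ℝ → ℝ}
    (hf : Lip1 D star f) (hg : Lip1 D star g) : Lip1 D star (sconv star f g) := by
  have hfg : ∀ x y, MemDP (star (f (x * y⁻¹)) (g y)) := fun x y => h.tri.mem _ _ (hf.1 _) (hg.1 _)
  have hmem : ∀ x, MemDP (sconv star f g x) := fun x => memDP_iSup (hfg x)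
  refine ⟨hmem, fun x x' t => ?_⟩
  rw [h.tri.comm _ _ (h.mem x x') (hmem x'),
    show sconv star f g x' = fun s => ⨆ y, star (f (x' * y⁻¹)) (g y) s from rfl,
    ← hsc G ⟨1⟩ _ (D x x') (hfg x') (h.mem x x') t]
  refine ciSup_le fun y => ?_
  have hlip : dpLE (star (D x x') (f (x' * y⁻¹))) (f (x * y⁻¹)) := by
    simpa only [h.invR] using hf.2 (x * y⁻¹) (x' * y⁻¹)
  calc star (star (f (x' * y⁻¹)) (g y)) (D x x') t
      = star (star (D x x') (f (x' * y⁻¹))) (g y) t := by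
        rw [h.tri.comm _ _ (hfg x' y) (h.mem x x'),
          h.tri.assoc _ _ _ (h.mem x x') (hf.1 _) (hg.1 _)]
    _ ≤ star (f (x * y⁻¹)) (g y) t :=
        h.tri.mono _ _ _ (h.tri.mem _ _ (h.mem _ _) (hf.1 _)) (hf.1 _) (hg.1 _) hlip t
    _ ≤ sconv star f g x t := le_sconv h.tri hf.1 hg.1 x y t

section RightInverse

variable {f g : G → ℝ → ℝ} (h : IsPIMG D star) (hf : Lip1 D star f) (hg : Lip1 D star g)
  (hfg : sconv star f g = dlt D 1)
include h hf hg hfg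

lemma exists_seq_wconv_of_sconv_eq_dlt_one :
    ∃ a : ℕ → G, WConv (fun n => f (a n)) H0 ∧ WConv (fun n => g (a n)⁻¹) H0 := by
  have hsup : ∀ n : ℕ, 1 - 1 / (n + 1 : ℝ) < ⨆ y, star (f y⁻¹) (g y) (1 / (n + 1 : ℝ)) := by
    intro n
    have hsup := congrFun (congrFun hfg 1) (1 / (n + 1 : ℝ))
    simp only [sconv, dlt, one_mul] at hsup
    rw [hsup, h.D_self, H0_of_pos (by positivity)]
    linarith [show (0 : ℝ) < 1 / (n + 1 : ℝ) by positivity]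
  choose y hy using fun n => exists_lt_of_lt_ciSup (hsup n)
  refine ⟨fun n => (y n)⁻¹, wconv_H0_of_one_sub_le (fun n => hf.1 _) fun n => ?_,
    wconv_H0_of_one_sub_le (fun n => hg.1 _) fun n => ?_⟩
  · exact (hy n).le.trans (h.tri.star_le_left (hf.1 _) (hg.1 _) _)
  · simpa only [inv_inv] using (hy n).le.trans (h.tri.star_le_right (hf.1 _) (hg.1 _) _)

lemma star_le_D_of_sconv_eq_dlt_one (a b : G) (t : ℝ) :
    star (f a) (g b⁻¹) t ≤ D a b t := by
  calc star (f a) (g b⁻¹) t = star (f (a * b⁻¹ * b⁻¹⁻¹)) (g b⁻¹) t := by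
        rw [inv_inv, inv_mul_cancel_right]
    _ ≤ sconv star f g (a * b⁻¹) t := le_sconv h.tri hf.1 hg.1 _ _ t
    _ = D a b t := by rw [hfg, dlt, h.D_mul_inv_one]

lemma le_D_inv_of_sconv_eq_dlt_one {w : G} (hgw : g w = H0) (x : G) :
    dpLE (f x) (D x w⁻¹) := by
  intro t
  calc f x t = star (f (x * w * w⁻¹)) (g w) t := by
        rw [hgw, h.tri.ident _ (hf.1 _), mul_inv_cancel_right]
    _ ≤ sconv star f g (x * w) t := le_sconv h.tri hf.1 hg.1 _ _ t
    _ = D x w⁻¹ t := by rw [hfg, dlt, ← h.D_mul_inv_one x w⁻¹, inv_inv]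

lemma exists_eq_dlt_of_sconv_eq_dlt_one (hc : StarCont star)
    (hcomp : ∀ a : ℕ → G, PCauchy D a → ∃ z : G, WConv (fun n => D (a n) z) H0) :
    ∃ z, f = dlt D z := by
  obtain ⟨a, hfa, hga⟩ := exists_seq_wconv_of_sconv_eq_dlt_one h hf hg hfg
  have hcau : PCauchy D a := hc.pCauchy_of_star_le h.tri (fun n => hf.1 _) (fun n => hg.1 _)
    hfa hga fun n p => star_le_D_of_sconv_eq_dlt_one h hf hg hfg (a n) (a p)
  obtain ⟨z, hz⟩ := hcomp a hcau
  obtain ⟨w, hw⟩ := hcomp _ (h.pCauchy_inv hcau)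
  have hlow := hf.D_le_of_eq_H0 h.toIsPMS (hf.eq_H0_of_wconv h.toIsPMS hc hfa hz)
  have hup := le_D_inv_of_sconv_eq_dlt_one h hf hg hfg (hg.eq_H0_of_wconv h.toIsPMS hc hga hw)
  obtain rfl : z = w⁻¹ := h.eq_of_H0_le fun t => by
    simpa only [h.D_self] using (hlow z t).trans (hup z t)
  exact ⟨w⁻¹, funext fun x => funext fun t => le_antisymm (hup x t) (hlow x t)⟩

end RightInverse

end MetricGroup

section Transport

variable {G G' : Type} {D : G → G → ℝ → ℝ} {D' : G' → G' → ℝ → ℝ}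
  {star : (ℝ → ℝ) → (ℝ → ℝ) → (ℝ → ℝ)}

lemma Lip1.comp_isometry {f : G → ℝ → ℝ} (hf : Lip1 D star f) (e : G' → G)
    (he : ∀ x y, D (e x) (e y) = D' x y) : Lip1 D' star (f ∘ e) :=
  ⟨fun x => hf.1 (e x), fun x y => he x y ▸ hf.2 (e x) (e y)⟩

lemma InPi.comp_isometry {f : G → ℝ → ℝ} (hf : InPi D star f) (e : G' ≃ G)
    (he : ∀ x y, D (e x) (e y) = D' x y) : InPi D' star (f ∘ e) := by
  obtain ⟨hl, a, hca, hconv⟩ := hf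
  have he' : ∀ x y, D' (e.symm x) (e.symm y) = D x y := fun x y => by
    simpa using (he (e.symm x) (e.symm y)).symm
  refine ⟨hl.comp_isometry e he, fun n => e.symm (a n), ?_, fun x => ?_⟩
  · simpa only [PCauchy, he'] using hca
  · simpa only [Function.comp_apply, ← he, e.apply_symm_apply] using hconv (e x)

lemma inPi_comp_isometry_iff {f : G → ℝ → ℝ} (e : G' ≃ G)
    (he : ∀ x y, D (e x) (e y) = D' x y) : InPi D' star (f ∘ e) ↔ InPi D star f := by
  refine ⟨fun hf => ?_, fun hf => hf.comp_isometry e he⟩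
  simpa [Function.comp_assoc] using
    hf.comp_isometry e.symm fun x y => by simpa using (he (e.symm x) (e.symm y)).symm

lemma DD_comp_equiv (e : G' ≃ G) (f g : G → ℝ → ℝ) : DD star (f ∘ e) (g ∘ e) = DD star f g :=
  funext fun t => e.iSup_comp (g := fun x => star (f x) (g x) t)

lemma DDbar_comp_isometry (e : G' ≃ G) (he : ∀ x y, D (e x) (e y) = D' x y)
    (f g : G → ℝ → ℝ) : DDbar D' star (f ∘ e) (g ∘ e) = DDbar D star f g := by
  have hPi : InPi D' star (f ∘ e) ∧ InPi D' star (g ∘ e) ↔ InPi D star f ∧ InPi D star g :=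
    and_congr (inPi_comp_isometry_iff e he) (inPi_comp_isometry_iff e he)
  have hEq : f ∘ e = g ∘ e ↔ f = g := e.surjective.injective_comp_right.eq_iff
  unfold DDbar
  split_ifs <;> first | exact DD_comp_equiv e f g | rfl | tauto

lemma sconv_comp_mulEquiv [Group G] [Group G'] (e : G' ≃* G) (f g : G → ℝ → ℝ) :
    sconv star (f ∘ e) (g ∘ e) = sconv star f g ∘ e := by
  funext x t
  exact e.toEquiv.iSup_congr fun y => by simp

end Transport

structure Lip1IsometricIso {G G' : Type} [Group G] [Group G'] (D : G → G → ℝ → ℝ)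
    (D' : G' → G' → ℝ → ℝ) (star : (ℝ → ℝ) → (ℝ → ℝ) → (ℝ → ℝ))
    (Φ : (G → ℝ → ℝ) → (G' → ℝ → ℝ)) : Prop where
  lip1 : ∀ f, Lip1 D star f → Lip1 D' star (Φ f)
  surj : ∀ g, Lip1 D' star g → ∃ f, Lip1 D star f ∧ Φ f = g
  inj : ∀ f g, Lip1 D star f → Lip1 D star g → Φ f = Φ g → f = g
  map_sconv : ∀ f g, Lip1 D star f → Lip1 D star g →
    Φ (sconv star f g) = sconv star (Φ f) (Φ g)
  map_dlt_one : Φ (dlt D 1) = dlt D' 1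
  DDbar_eq : ∀ f g, Lip1 D star f → Lip1 D star g →
    DDbar D' star (Φ f) (Φ g) = DDbar D star f g

section Isometry

variable {G G' : Type} [Group G] [Group G'] {D : G → G → ℝ → ℝ} {D' : G' → G' → ℝ → ℝ}
  {star : (ℝ → ℝ) → (ℝ → ℝ) → (ℝ → ℝ)}

lemma lip1IsometricIso_comp (e : G' ≃* G) (he : ∀ x y, D (e x) (e y) = D' x y) :
    Lip1IsometricIso D D' star (fun f => f ∘ e) where
  lip1 f hf := hf.comp_isometry e he
  surj g hg := ⟨g ∘ e.symm, hg.comp_isometry e.symm fun x y => by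
    simpa using (he (e.symm x) (e.symm y)).symm,
    by ext; simp⟩
  inj _ _ _ _ hfg := e.surjective.injective_comp_right hfg
  map_sconv f g _ _ := (sconv_comp_mulEquiv e f g).symm
  map_dlt_one := funext fun x => by simp [dlt, ← he]
  DDbar_eq f g _ _ := DDbar_comp_isometry e.toEquiv he f g

namespace Lip1IsometricIso

variable {Φ : (G → ℝ → ℝ) → (G' → ℝ → ℝ)} (hΦ : Lip1IsometricIso D D' star Φ)
  (h : IsPIMG D star) (h' : IsPIMG D' star) (hc : StarCont star)
include hΦ h h' hc

lemma exists_map_dlt_eq_dlt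
    (hcomp' : ∀ a : ℕ → G', PCauchy D' a → ∃ z : G', WConv (fun n => D' (a n) z) H0) (a : G) :
    ∃ z, Φ (dlt D a) = dlt D' z := by
  refine exists_eq_dlt_of_sconv_eq_dlt_one h' (hΦ.lip1 _ (h.lip1_dlt a))
    (hΦ.lip1 _ (h.lip1_dlt a⁻¹)) ?_ hc hcomp'
  rw [← hΦ.map_sconv _ _ (h.lip1_dlt a) (h.lip1_dlt a⁻¹), h.sconv_dlt, mul_inv_cancel,
    hΦ.map_dlt_one]

lemma exists_eq_dlt_of_map_eq_dlt (hsc : SupCont star)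
    (hcomp : ∀ a : ℕ → G, PCauchy D a → ∃ z : G, WConv (fun n => D (a n) z) H0)
    {f : G → ℝ → ℝ} (hf : Lip1 D star f) {b : G'} (hfb : Φ f = dlt D' b) :
    ∃ c, f = dlt D c := by
  obtain ⟨f', hf', hf'b⟩ := hΦ.surj _ (h'.lip1_dlt b⁻¹)
  refine exists_eq_dlt_of_sconv_eq_dlt_one h hf hf' ?_ hc hcomp
  refine hΦ.inj _ _ (h.lip1_sconv hsc hf hf') (h.lip1_dlt 1) ?_
  rw [hΦ.map_sconv _ _ hf hf', hfb, hf'b, h'.sconv_dlt, mul_inv_cancel, hΦ.map_dlt_one]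

lemma exists_isometry_mulEquiv (hsc : SupCont star)
    (hcomp : ∀ a : ℕ → G, PCauchy D a → ∃ z : G, WConv (fun n => D (a n) z) H0)
    (hcomp' : ∀ a : ℕ → G', PCauchy D' a → ∃ z : G', WConv (fun n => D' (a n) z) H0) :
    ∃ I : G ≃* G', ∀ x y : G, D' (I x) (I y) = D x y := by
  choose J hJ using hΦ.exists_map_dlt_eq_dlt h h' hc hcomp'
  have hJmul : ∀ a b, J (a * b) = J a * J b := fun a b => h'.dlt_injective <| by
    rw [← hJ, ← h'.sconv_dlt, ← hJ, ← hJ, ← hΦ.map_sconv _ _ (h.lip1_dlt a) (h.lip1_dlt b),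
      h.sconv_dlt]
  have hJinj : Function.Injective J := fun a b hab => h.toIsPMS.dlt_injective <|
    hΦ.inj _ _ (h.lip1_dlt a) (h.lip1_dlt b) (by rw [hJ, hJ, hab])
  have hJsurj : Function.Surjective J := fun b => by
    obtain ⟨f, hf, hfb⟩ := hΦ.surj _ (h'.lip1_dlt b)
    obtain ⟨c, rfl⟩ := hΦ.exists_eq_dlt_of_map_eq_dlt h h' hc hsc hcomp hf hfb
    exact ⟨c, h'.dlt_injective ((hJ c).symm.trans hfb)⟩
  refine ⟨MulEquiv.mk' (Equiv.ofBijective J ⟨hJinj, hJsurj⟩) hJmul, fun x y => ?_⟩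
  show D' (J x) (J y) = D x y
  simpa only [hJ, h'.DDbar_dlt, h.DDbar_dlt] using hΦ.DDbar_eq _ _ (h.lip1_dlt x) (h.lip1_dlt y)

end Lip1IsometricIso

end Isometry

theorem stmt19_general {G G' : Type} [Group G] [Group G']
    (D : G → G → ℝ → ℝ) (D' : G' → G' → ℝ → ℝ)
    (star : (ℝ → ℝ) → (ℝ → ℝ) → (ℝ → ℝ))
    (h : IsPIMG D star) (h' : IsPIMG D' star)
    (hc : StarCont star) (hsc : SupCont star)
    (hcomp : ∀ a : ℕ → G, PCauchy D a →
      ∃ z : G, WConv (fun n => D (a n) z) H0)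
    (hcomp' : ∀ a : ℕ → G', PCauchy D' a →
      ∃ z : G', WConv (fun n => D' (a n) z) H0) :
    (∃ I : G ≃* G', ∀ x y : G, D' (I x) (I y) = D x y) ↔
    (∃ Φ : (G → ℝ → ℝ) → (G' → ℝ → ℝ),
      (∀ f, Lip1 D star f → Lip1 D' star (Φ f)) ∧
      (∀ g, Lip1 D' star g → ∃ f, Lip1 D star f ∧ Φ f = g) ∧
      (∀ f g, Lip1 D star f → Lip1 D star g → Φ f = Φ g → f = g) ∧
      (∀ f g, Lip1 D star f → Lip1 D star g →
        Φ (sconv star f g) = sconv star (Φ f) (Φ g)) ∧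
      Φ (dlt D 1) = dlt D' 1 ∧
      (∀ f g, Lip1 D star f → Lip1 D star g →
        DDbar D' star (Φ f) (Φ g) = DDbar D star f g)) := by
  constructor
  · rintro ⟨I, hI⟩
    have hΦ : Lip1IsometricIso D D' star (fun f => f ∘ I.symm) :=
      lip1IsometricIso_comp I.symm fun x y => by simpa using (hI (I.symm x) (I.symm y)).symm
    exact ⟨_, hΦ.lip1, hΦ.surj, hΦ.inj, hΦ.map_sconv, hΦ.map_dlt_one, hΦ.DDbar_eq⟩
  · rintro ⟨Φ, hlip, hsurj, hinj, hsconv, hone, hDD⟩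
    exact Lip1IsometricIso.exists_isometry_mulEquiv ⟨hlip, hsurj, hinj, hsconv, hone, hDD⟩
      h h' hc hsc hcomp hcomp'

/-- probabilistic Banach–Stone: two probabilistic invariant
complete metric groups are isometrically isomorphic iff their monoids of
probabilistic 1-Lipschitz maps are isometrically isomorphic. -/
theorem stmt19 {G G' : Type} [Group G] [Group G']
    (D : G → G → ℝ → ℝ) (D' : G' → G' → ℝ → ℝ)
    (star : (ℝ → ℝ) → (ℝ → ℝ) → (ℝ → ℝ))
    (h : IsPIMG D star) (h' : IsPIMG D' star)
    (hc : StarCont star) (hsc : SupCont star)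
    (htriv : ∀ U, (MemDP U ∧ ∃ V, MemDP V ∧ star U V = H0 ∧ star V U = H0) →
      U = H0)
    (hcomp : ∀ a : ℕ → G, PCauchy D a →
      ∃ z : G, WConv (fun n => D (a n) z) H0)
    (hcomp' : ∀ a : ℕ → G', PCauchy D' a →
      ∃ z : G', WConv (fun n => D' (a n) z) H0) :
    (∃ I : G ≃* G', ∀ x y : G, D' (I x) (I y) = D x y) ↔
    (∃ Φ : (G → ℝ → ℝ) → (G' → ℝ → ℝ),
      (∀ f, Lip1 D star f → Lip1 D' star (Φ f)) ∧
      (∀ g, Lip1 D' star g → ∃ f, Lip1 D star f ∧ Φ f = g) ∧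
      (∀ f g, Lip1 D star f → Lip1 D star g → Φ f = Φ g → f = g) ∧
      (∀ f g, Lip1 D star f → Lip1 D star g →
        Φ (sconv star f g) = sconv star (Φ f) (Φ g)) ∧
      Φ (dlt D 1) = dlt D' 1 ∧
      (∀ f g, Lip1 D star f → Lip1 D star g →
        DDbar D' star (Φ f) (Φ g) = DDbar D star f g)) :=
  stmt19_general D D' star h h' hc hsc hcomp hcomp'
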